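/- There do not exist real numbers k₀, l₁, l₂, l₃, q₁, q₂, q₃ and real numbers c < d such that the quadratic pseudo-Boolean function f(x₁,x₂,z) = k₀ + l₁x₁ + l₂x₂ + l₃z + q₁x₁x₂ + q₂x₁z + q₃x₂z satisfies f(x₁,x₂,z) = c whenever z = x₁ ⊕ x₂ (exclusive OR, i.e. z = x₁ + x₂ − 2x₁x₂) and f(x₁,x₂,z) ≥ d whenever z ≠ x₁ ⊕ x₂, for x₁, x₂, z ∈ {0,1}. -/
import Mathlib

/-- No quadratic (2-local) pseudo-Boolean function of three variables can take a
constant value `c` exactly on the truth table of XOR (`z = x₁ ⊕ x₂`) while being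
at least `d > c` off the truth table. -/
theorem xor_not_two_local_realizable :
    ¬ ∃ (k₀ l₁ l₂ l₃ q₁ q₂ q₃ c d : ℝ), c < d ∧
      ∀ x₁ x₂ z : ℝ, (x₁ = 0 ∨ x₁ = 1) → (x₂ = 0 ∨ x₂ = 1) → (z = 0 ∨ z = 1) →
        ((z = x₁ + x₂ - 2 * x₁ * x₂ →
            k₀ + l₁ * x₁ + l₂ * x₂ + l₃ * z + q₁ * x₁ * x₂ + q₂ * x₁ * z + q₃ * x₂ * z = c) ∧
         (z ≠ x₁ + x₂ - 2 * x₁ * x₂ →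
            d ≤ k₀ + l₁ * x₁ + l₂ * x₂ + l₃ * z + q₁ * x₁ * x₂ + q₂ * x₁ * z + q₃ * x₂ * z)) := by
  rintro ⟨k₀, l₁, l₂, l₃, q₁, q₂, q₃, c, d, hcd, h⟩
  have e1 := (h 0 0 0 (.inl rfl) (.inl rfl) (.inl rfl)).1 (by norm_num)
  have e2 := (h 0 1 1 (.inl rfl) (.inr rfl) (.inr rfl)).1 (by norm_num)
  have e3 := (h 1 0 1 (.inr rfl) (.inl rfl) (.inr rfl)).1 (by norm_num)
  have e4 := (h 1 1 0 (.inr rfl) (.inr rfl) (.inl rfl)).1 (by norm_num)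
  have i1 := (h 0 0 1 (.inl rfl) (.inl rfl) (.inr rfl)).2 (by norm_num)
  have i2 := (h 0 1 0 (.inl rfl) (.inr rfl) (.inl rfl)).2 (by norm_num)
  have i3 := (h 1 0 0 (.inr rfl) (.inl rfl) (.inl rfl)).2 (by norm_num)
  have i4 := (h 1 1 1 (.inr rfl) (.inr rfl) (.inr rfl)).2 (by norm_num)
  linarith
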